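/- arXiv:1707.09151 — 2 statements merged into one kernel-verified Lean document; each statement's English description precedes it below -/
import Mathlib

section
/- For all natural numbers k ≥ 1, α, and n ≥ 1, the Fibonacci subsequence satisfies F_{k(n+1)+α} = L_k·F_{kn+α} + (−1)^{k−1}·F_{k(n−1)+α}, where L_k is the k-th Lucas number. -/
/-!
Binet: with `φ ψ` the roots of `X² = X + 1`, `√5 F_j = φ^j - ψ^j` and `L_k = φ^k + ψ^k`. Expanding
`(φ^k + ψ^k)(φ^(m+k) - ψ^(m+k))` gives `φ^(m+2k) - ψ^(m+2k)` plus the cross terms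
`(φψ)^k (φ^m - ψ^m)`, and `φψ = -1`; hence `F_(m+2k) = L_k F_(m+k) - (-1)^k F_m`, which is the
claim with `m = k(n-1) + α`.
-/

open Real goldenRatio

lemma pow_add_two_mul_sub_pow {R : Type*} [CommRing R] (x y : R) (m k : ℕ) :
    x ^ (m + 2 * k) - y ^ (m + 2 * k) =
      (x ^ k + y ^ k) * (x ^ (m + k) - y ^ (m + k)) - (x * y) ^ k * (x ^ m - y ^ m) := by
  ring

lemma intCast_eq_pow_add_pow_of_lucas {R : Type*} [CommRing R] (L : ℕ → ℤ)
    (hL0 : L 0 = 2) (hL1 : L 1 = 1) (hLrec : ∀ n : ℕ, L (n + 2) = L (n + 1) + L n)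
    {x y : R} (hx : x ^ 2 = x + 1) (hy : y ^ 2 = y + 1) (hxy : x + y = 1) :
    ∀ k : ℕ, (L k : R) = x ^ k + y ^ k
  | 0 => by rw [hL0]; norm_num
  | 1 => by rw [hL1, pow_one, pow_one, hxy, Int.cast_one]
  | k + 2 => by
    rw [hLrec, Int.cast_add, intCast_eq_pow_add_pow_of_lucas L hL0 hL1 hLrec hx hy hxy k,
      intCast_eq_pow_add_pow_of_lucas L hL0 hL1 hLrec hx hy hxy (k + 1)]
    linear_combination -x ^ k * hx - y ^ k * hy

lemma coe_fib_add_two_mul (m k : ℕ) :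
    (Nat.fib (m + 2 * k) : ℝ) = (φ ^ k + ψ ^ k) * Nat.fib (m + k) - (-1) ^ k * Nat.fib m := by
  rw [coe_fib_eq, coe_fib_eq, coe_fib_eq, ← goldenRatio_mul_goldenConj, pow_add_two_mul_sub_pow,
    sub_div, mul_div_assoc, mul_div_assoc]

theorem equi_fib_recursion (L : ℕ → ℤ)
    (hL0 : L 0 = 2) (hL1 : L 1 = 1)
    (hLrec : ∀ n : ℕ, L (n + 2) = L (n + 1) + L n)
    (k α n : ℕ) (hk : 1 ≤ k) (hn : 1 ≤ n) :
    (Nat.fib (k * (n + 1) + α) : ℤ) =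
      L k * Nat.fib (k * n + α) + (-1) ^ (k - 1) * Nat.fib (k * (n - 1) + α) := by
  obtain ⟨k, rfl⟩ := Nat.exists_eq_add_of_le' hk
  obtain ⟨n, rfl⟩ := Nat.exists_eq_add_of_le' hn
  set m := (k + 1) * n + α
  rw [show (k + 1) * (n + 1 + 1) + α = m + 2 * (k + 1) by ring,
    show (k + 1) * (n + 1) + α = m + (k + 1) by ring, Nat.add_sub_cancel, Nat.add_sub_cancel]
  apply Int.cast_injective (α := ℝ)
  push_cast
  rw [coe_fib_add_two_mul, intCast_eq_pow_add_pow_of_lucas L hL0 hL1 hLrec goldenRatio_sq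
    goldenConj_sq goldenRatio_add_goldenConj]
  ring
end

section
/- For all natural numbers k ≥ 1, α, and n ≥ 1: F_{kn+α} = F_{α+k}·H_n + (−1)^{k+1}·F_α·H_{n−1}, where H_n = F_{nk}/F_k is the higher-order Fibonacci sequence. -/
/-!
Multiplying by `F_k ≠ 0` and using `F_{mk} = F_k H_m`, the claim becomes, with `n = n' + 1`,
`F_k F_{k + α + kn'} = F_{k+α} F_{k + kn'} + (-1)^{k+1} F_α F_{kn'}`, an instance of
Vajda's identity `F_{n+i} F_{n+j} - F_n F_{n+i+j} = (-1)^n F_i F_j`. For integer indices, Vajda's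
identity follows from the addition formula and Cassini's identity.
-/

namespace Int

theorem fib_add_one_eq_fib_sub_one_add_fib (n : ℤ) : fib (n + 1) = fib (n - 1) + fib n := by
  have h := fib_add_two (n - 1)
  rwa [sub_add_cancel, show n - 1 + 2 = n + 1 by ring] at h

theorem fib_add_mul_fib_add_sub_fib_mul_fib_add_add (n i j : ℤ) :
    fib (n + i) * fib (n + j) - fib n * fib (n + i + j) = (-1) ^ n.natAbs * fib i * fib j := by
  rw [add_assoc, fib_add n (i + j), fib_add n i, fib_add n j, fib_add i j,
    show i + j + 1 = i + 1 + j by ring, fib_add (i + 1) j, add_sub_cancel_right]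
  linear_combination (fib (n - 1) * fib n * fib j) * fib_add_one_eq_fib_sub_one_add_fib i
    + fib i * fib j * fib_succ_mul_fib_pred_sub_fib_sq n
    - fib i * fib j * fib (n - 1) * fib_add_one_eq_fib_sub_one_add_fib n

end Int

theorem Nat.fib_mul_fib_add_add (k i j : ℕ) :
    (fib k * fib (k + i + j) : ℤ) =
      fib (k + i) * fib (k + j) + (-1) ^ (k + 1) * fib i * fib j := by
  have vajda := Int.fib_add_mul_fib_add_sub_fib_mul_fib_add_add k i j
  push_cast [← Int.fib_natCast, Int.natAbs_natCast] at vajda ⊢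
  linear_combination (pow_succ (-1 : ℤ) k) * fib i * fib j - vajda

theorem equi_fib_superposition (k : ℕ) (hk : 1 ≤ k)
    (H : ℕ → ℕ) (hH : ∀ m : ℕ, H m * Nat.fib k = Nat.fib (m * k))
    (α n : ℕ) (hn : 1 ≤ n) :
    (Nat.fib (k * n + α) : ℤ) =
      Nat.fib (α + k) * H n + (-1) ^ (k + 1) * Nat.fib α * H (n - 1) := by
  obtain ⟨m, rfl⟩ : ∃ m, n = m + 1 := ⟨n - 1, by omega⟩
  have hfib_k : (Nat.fib k : ℤ) ≠ 0 := by exact_mod_cast (Nat.fib_pos.mpr hk).ne'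
  have hH_int (j : ℕ) : (Nat.fib (k * j) : ℤ) = H j * Nat.fib k := by
    rw [mul_comm k]; exact_mod_cast (hH j).symm
  apply mul_left_cancel₀ hfib_k
  calc (Nat.fib k : ℤ) * Nat.fib (k * (m + 1) + α)
      = Nat.fib k * Nat.fib (k + α + k * m) := by ring_nf
    _ = Nat.fib (k + α) * Nat.fib (k * (m + 1)) +
          (-1) ^ (k + 1) * Nat.fib α * Nat.fib (k * m) := by
      rw [Nat.fib_mul_fib_add_add, mul_add_one k m, add_comm (k * m)]
    _ = Nat.fib k *
          (Nat.fib (α + k) * H (m + 1) + (-1) ^ (k + 1) * Nat.fib α * H (m + 1 - 1)) := by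
      rw [hH_int, hH_int, add_comm k α, Nat.add_sub_cancel]
      ring
end
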